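/- Let Ω ⊆ ℝ^d be a domain whose boundary Γ is Ahlfors s-regular with s ∈ [d−1, d). Assume there are z ∈ Γ and R > 0 such that Ω_{z,R} = Ω ∩ B(z;R) is Ω-uniform. Then for A = Γ ∩ B(z;R/2) there exist c', R' > 0 such that |A_r| ≥ c'·r^{d−s} for all r ∈ (0,R'). -/

import Mathlib

/-!
Ahlfors regularity gives `A` mass comparable to `R^s`, while each `3r`-ball centred on `A`
carries mass at most a constant times `r^s`; a greedy choice therefore produces at least a constant
times `r^(-s)` points of `A` that are `3r`-separated. Uniformity puts a corkscrew ball of radius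
`r/(4σ)` inside `Ω ∩ B(ξ; r)` next to each such point `ξ`: follow a uniform curve from a point
of `Ω` near `ξ` to a point at distance at least `r/2` until it is at distance `r/4`. These balls are
disjoint and lie in `A_r`, so `|A_r|` is at least a constant times `r^(-s) · r^d`.
-/

open MeasureTheory Metric Set
open scoped ENNReal NNReal

noncomputable section

/-- Euclidean space ℝ^d. -/
abbrev Euc (d : ℕ) : Type := EuclideanSpace ℝ (Fin d)


/-- The inner `r`-neighbourhood `A_r = {x ∈ closure Ω : d_A(x) < r}`. -/
def innNbhd (d : ℕ) (Ω A : Set (Euc d)) (r : ℝ) : Set (Euc d) :=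
  {x ∈ closure Ω | infDist x A < r}

/-- The boundary set `Γ` is (locally uniformly) Ahlfors `s`-regular. -/
def AhlforsRegular (d : ℕ) (Γ : Set (Euc d)) (s : ℝ) : Prop :=
  ∃ μ : Measure (Euc d), μ.Regular ∧ μ Γᶜ = 0 ∧
    ∀ x₀ ∈ Γ, ∀ R₀ : ℝ, 0 < R₀ → ∃ c > (0 : ℝ),
      ∀ x ∈ Γ ∩ ball x₀ R₀, ∀ r : ℝ, 0 < r → r < 2 * R₀ →
        ENNReal.ofReal (c⁻¹ * r ^ s) ≤ μ (Γ ∩ ball x₀ R₀ ∩ ball x r) ∧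
        μ (Γ ∩ ball x₀ R₀ ∩ ball x r) ≤ ENNReal.ofReal (c * r ^ s)

/-- The uniformity curve condition. -/
def UniformCurve (d : ℕ) (Ω : Set (Euc d)) (σ : ℝ) (x y : Euc d) : Prop :=
  ∃ γ : ℝ → Euc d, ContinuousOn γ (Icc 0 1) ∧ γ 0 = x ∧ γ 1 = y ∧
    (∀ t ∈ Icc (0 : ℝ) 1, γ t ∈ Ω) ∧
    eVariationOn γ (Icc 0 1) ≤ ENNReal.ofReal (σ * dist x y) ∧
    ∀ t ∈ Icc (0 : ℝ) 1,
      σ⁻¹ * min (dist x (γ t)) (dist (γ t) y) ≤ infDist (γ t) (frontier Ω)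

/-- `Ω_{z,R} = Ω ∩ B(z;R)` is `Ω`-uniform (with some constant `σ ≥ 1`). -/
def OmegaUniform (d : ℕ) (Ω : Set (Euc d)) (z : Euc d) (R : ℝ) : Prop :=
  ∃ σ : ℝ, 1 ≤ σ ∧ ∀ x ∈ Ω ∩ ball z R, ∀ y ∈ Ω ∩ ball z R, UniformCurve d Ω σ x y

section Separated

variable {α : Type*} [PseudoMetricSpace α] [MeasurableSpace α] {μ : Measure α} {A : Set α}
  {ρ : ℝ} {X : ℝ≥0∞}

lemma exists_mem_forall_le_dist_of_card_mul_lt (hX : ∀ x ∈ A, μ (A ∩ ball x ρ) ≤ X)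
    {F : Finset α} (hFA : ↑F ⊆ A) (hF : F.card * X < μ A) :
    ∃ p ∈ A, ∀ q ∈ F, ρ ≤ dist p q := by
  by_contra! h
  have hcover : A ⊆ ⋃ q ∈ F, A ∩ ball q ρ := fun p hp ↦
    let ⟨q, hq, hpq⟩ := h p hp
    mem_iUnion₂.2 ⟨q, hq, hp, hpq⟩
  have : μ A ≤ F.card * X :=
    calc μ A ≤ ∑ q ∈ F, μ (A ∩ ball q ρ) :=
          (measure_mono hcover).trans (measure_biUnion_finset_le F _)
      _ ≤ ∑ _q ∈ F, X := Finset.sum_le_sum fun q hq ↦ hX q (hFA hq)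
      _ = F.card * X := by rw [Finset.sum_const, nsmul_eq_mul]
  exact (this.trans_lt hF).false

lemma exists_finset_pairwise_le_dist_measure_le_card_mul (hρ : 0 < ρ)
    (hX : ∀ x ∈ A, μ (A ∩ ball x ρ) ≤ X) (hX0 : X ≠ 0) (hA : μ A ≠ ∞) :
    ∃ F : Finset α, ↑F ⊆ A ∧ (F : Set α).Pairwise (fun p q ↦ ρ ≤ dist p q) ∧
      μ A ≤ F.card * X := by
  classical
  have greedy : ∀ n : ℕ, ∃ F : Finset α, ↑F ⊆ A ∧ (F : Set α).Pairwise (fun p q ↦ ρ ≤ dist p q) ∧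
      (F.card = n ∨ μ A ≤ F.card * X) := by
    intro n
    induction n with
    | zero => exact ⟨∅, by simp, by simp, Or.inl rfl⟩
    | succ n ih =>
      obtain ⟨F, hFA, hF, hcard⟩ := ih
      by_cases hμ : μ A ≤ F.card * X
      · exact ⟨F, hFA, hF, Or.inr hμ⟩
      obtain ⟨p, hpA, hp⟩ := exists_mem_forall_le_dist_of_card_mul_lt hX hFA (not_le.1 hμ)
      have hpF : p ∉ F := fun hpF ↦ (hp p hpF).not_gt (by rwa [dist_self])
      refine ⟨insert p F, ?_, ?_, Or.inl ?_⟩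
      · rw [Finset.coe_insert]
        exact insert_subset hpA hFA
      · rw [Finset.coe_insert, pairwise_insert]
        exact ⟨hF, fun q hq _ ↦ ⟨hp q hq, dist_comm p q ▸ hp q hq⟩⟩
      · rw [Finset.card_insert_of_notMem hpF, hcard.resolve_right hμ]
  obtain ⟨n, hn⟩ := ENNReal.exists_nat_mul_gt hX0 hA
  obtain ⟨F, hFA, hF, hcard | hμ⟩ := greedy n
  · exact ⟨F, hFA, hF, hcard ▸ hn.le⟩
  · exact ⟨F, hFA, hF, hμ⟩

lemma exists_finset_pairwise_le_dist_le_card_mul (hρ : 0 < ρ) {L M : ℝ}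
    (hL : ENNReal.ofReal L ≤ μ A) (hA : μ A ≠ ∞) (hM : 0 < M)
    (hX : ∀ x ∈ A, μ (A ∩ ball x ρ) ≤ ENNReal.ofReal M) :
    ∃ F : Finset α, ↑F ⊆ A ∧ (F : Set α).Pairwise (fun p q ↦ ρ ≤ dist p q) ∧
      L ≤ F.card * M := by
  obtain ⟨F, hFA, hF, hμ⟩ := exists_finset_pairwise_le_dist_measure_le_card_mul hρ hX
    (ENNReal.ofReal_pos.2 hM).ne' hA
  refine ⟨F, hFA, hF, ?_⟩
  rw [← ENNReal.ofReal_natCast, ← ENNReal.ofReal_mul (Nat.cast_nonneg _)] at hμ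
  exact (ENNReal.ofReal_le_ofReal_iff (by positivity)).1 (hL.trans hμ)

end Separated

lemma Set.Pairwise.pairwiseDisjoint_ball {α : Type*} [PseudoMetricSpace α] {F : Set α}
    {w : α → α} {r ρ : ℝ} (hF : F.Pairwise fun p q ↦ 3 * r ≤ dist p q)
    (hw : ∀ p ∈ F, dist (w p) p < r) (hρ : ρ ≤ r / 2) :
    F.PairwiseDisjoint fun p ↦ ball (w p) ρ := by
  intro p hp q hq hpq
  refine ball_disjoint_ball ?_
  linarith [dist_triangle4 p (w p) (w q) q, hF hp hq hpq, hw p hp, hw q hq, dist_comm p (w p)]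

lemma card_mul_measure_ball_le {E ι : Type*} [NormedAddCommGroup E] [MeasurableSpace E]
    [BorelSpace E] (μ : Measure E) [μ.IsAddHaarMeasure] {F : Finset ι} {w : ι → E} {ρ : ℝ}
    {S : Set E} (hF : (F : Set ι).PairwiseDisjoint fun i ↦ ball (w i) ρ)
    (hS : ∀ i ∈ F, ball (w i) ρ ⊆ S) :
    F.card * μ (ball 0 ρ) ≤ μ S :=
  calc F.card * μ (ball 0 ρ) = ∑ i ∈ F, μ (ball (w i) ρ) := by
        simp [Measure.addHaar_ball_center]
    _ = μ (⋃ i ∈ F, ball (w i) ρ) :=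
        (measure_biUnion_finset hF fun _ _ ↦ measurableSet_ball).symm
    _ ≤ μ S := measure_mono (iUnion₂_subset hS)

lemma nontrivial_of_mem_frontier {X : Type*} [TopologicalSpace X] {s : Set X} {x : X}
    (hx : x ∈ frontier s) : Nontrivial X := by
  obtain ⟨a, ha⟩ := closure_nonempty_iff.1 ⟨x, frontier_subset_closure hx⟩
  obtain ⟨b, hb⟩ : ∃ b, b ∉ s := by
    by_contra! h
    rw [eq_univ_of_forall h, frontier_univ] at hx
    exact hx
  exact nontrivial_of_ne a b (ne_of_mem_of_not_mem ha hb)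

section Uniform

variable {d : ℕ} {Ω : Set (Euc d)}

lemma UniformCurve.exists_ball_subset (hΩ : Ω ≠ univ) {σ : ℝ} {x y : Euc d}
    (h : UniformCurve d Ω σ x y) {ρ : ℝ} (hρ : 0 ≤ ρ) (hρxy : 2 * ρ ≤ dist x y) :
    ∃ w, dist x w = ρ ∧ ball w (σ⁻¹ * ρ) ⊆ Ω := by
  obtain ⟨γ, hγc, hγ0, hγ1, hγΩ, -, hγd⟩ := h
  obtain ⟨t, ht, hxt⟩ : ∃ t ∈ Icc (0 : ℝ) 1, dist x (γ t) = ρ := by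
    refine intermediate_value_Icc zero_le_one
      ((continuous_const.dist continuous_id).comp_continuousOn hγc) ?_
    simp only [Function.comp_apply, id, hγ0, hγ1, dist_self]
    exact ⟨hρ, by linarith⟩
  have hty : ρ ≤ dist (γ t) y := by linarith [dist_triangle x (γ t) y]
  obtain ⟨p, hp, hpd⟩ := exists_mem_frontier_infDist_compl_eq_dist (hγΩ t ht) hΩ
  refine ⟨γ t, hxt, (ball_subset_ball ?_).trans ball_infDist_compl_subset⟩
  calc σ⁻¹ * ρ = σ⁻¹ * min (dist x (γ t)) (dist (γ t) y) := by rw [hxt, min_eq_left hty]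
    _ ≤ infDist (γ t) (frontier Ω) := hγd t ht
    _ ≤ infDist (γ t) Ωᶜ := hpd ▸ infDist_le_dist_of_mem hp

lemma exists_ball_subset_inter_ball (hΩ : Ω ≠ univ) {σ : ℝ} (hσ : 1 ≤ σ) {z : Euc d} {R : ℝ}
    (hU : ∀ x ∈ Ω ∩ ball z R, ∀ y ∈ Ω ∩ ball z R, UniformCurve d Ω σ x y)
    {y₁ y₂ : Euc d} (hy₁ : y₁ ∈ Ω ∩ ball z R) (hy₂ : y₂ ∈ Ω ∩ ball z R) {r : ℝ} (hr : 0 < r)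
    (hry : r ≤ dist y₁ y₂) (hrR : r < R) {ξ : Euc d} (hξ : ξ ∈ closure Ω ∩ ball z (R / 2)) :
    ∃ w, ball w (r / (4 * σ)) ⊆ Ω ∩ ball ξ r := by
  obtain ⟨x, hxΩ, hξx⟩ := Metric.mem_closure_iff.1 hξ.1 (r / 4) (by positivity)
  have hx : x ∈ Ω ∩ ball z R :=
    ⟨hxΩ, mem_ball.2 (by linarith [dist_triangle x ξ z, mem_ball.1 hξ.2, dist_comm ξ x])⟩
  obtain ⟨y, hy, hxy⟩ : ∃ y ∈ Ω ∩ ball z R, r / 2 ≤ dist x y := by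
    by_contra! h
    linarith [dist_triangle_left y₁ y₂ x, h y₁ hy₁, h y₂ hy₂]
  obtain ⟨w, hxw, hw⟩ :=
    (hU x hx y hy).exists_ball_subset hΩ (by positivity : 0 ≤ r / 4) (by linarith)
  have hradius : r / (4 * σ) = σ⁻¹ * (r / 4) := by ring
  have hradius_le : r / (4 * σ) ≤ r / 4 := div_le_div_of_nonneg_left hr.le (by norm_num)
    (by linarith)
  refine ⟨w, fun u hu ↦ ⟨hw (hradius ▸ hu), ?_⟩⟩
  rw [mem_ball] at hu ⊢
  linarith [dist_triangle4 u w x ξ, dist_comm w x, dist_comm ξ x]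

end Uniform

lemma inter_ball_subset_innNbhd {d : ℕ} {Ω A : Set (Euc d)} {ξ : Euc d} (hξ : ξ ∈ A) (r : ℝ) :
    Ω ∩ ball ξ r ⊆ innNbhd d Ω A r :=
  fun _ hx ↦ ⟨subset_closure hx.1, (infDist_le_dist_of_mem hξ).trans_lt hx.2⟩

lemma exists_mem_inter_ball_ne_of_mem_frontier {d : ℕ} {Ω : Set (Euc d)} (hΩ : IsOpen Ω)
    {z : Euc d} (hz : z ∈ frontier Ω) {R : ℝ} (hR : 0 < R) :
    ∃ y₁ ∈ Ω ∩ ball z R, ∃ y₂ ∈ Ω ∩ ball z R, y₂ ≠ y₁ := by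
  have := nontrivial_of_mem_frontier hz
  obtain ⟨y₁, hy₁Ω, hzy₁⟩ := Metric.mem_closure_iff.1 (frontier_subset_closure hz) R hR
  have hy₁ : y₁ ∈ Ω ∩ ball z R := ⟨hy₁Ω, mem_ball'.2 hzy₁⟩
  exact ⟨y₁, hy₁, ((eventually_nhdsWithin_of_eventually_nhds (s := {y₁}ᶜ)
    ((hΩ.inter isOpen_ball).mem_nhds hy₁)).and self_mem_nhdsWithin).exists⟩

lemma AhlforsRegular.exists_measure_bounds {d : ℕ} {Γ : Set (Euc d)} {s : ℝ}
    (h : AhlforsRegular d Γ s) {z : Euc d} (hz : z ∈ Γ) {R : ℝ} (hR : 0 < R) :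
    ∃ μ : Measure (Euc d), ∃ c > (0 : ℝ), ENNReal.ofReal (c⁻¹ * R ^ s) ≤ μ (Γ ∩ ball z R) ∧
      μ (Γ ∩ ball z R) ≠ ∞ ∧ ∀ x ∈ Γ ∩ ball z R, ∀ ρ : ℝ, 0 < ρ → ρ < 2 * R →
        μ (Γ ∩ ball z R ∩ ball x ρ) ≤ ENNReal.ofReal (c * ρ ^ s) := by
  obtain ⟨μ, -, -, hμ⟩ := h
  obtain ⟨c, hc, hμc⟩ := hμ z hz R hR
  obtain ⟨hlow, hup⟩ := hμc z ⟨hz, mem_ball_self hR⟩ R hR (by linarith)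
  rw [inter_eq_left.2 inter_subset_right] at hlow hup
  exact ⟨μ, c, hc, hlow, (hup.trans_lt ENNReal.ofReal_lt_top).ne, fun x hx ρ hρ hρR ↦
    (hμc x hx ρ hρ hρR).2⟩

lemma card_mul_volume_ball_le_volume_innNbhd {d : ℕ} {Ω A : Set (Euc d)} (hΩ : Ω ≠ univ)
    {σ : ℝ} (hσ : 1 ≤ σ) {z : Euc d} {R : ℝ}
    (hU : ∀ x ∈ Ω ∩ ball z R, ∀ y ∈ Ω ∩ ball z R, UniformCurve d Ω σ x y)
    {y₁ y₂ : Euc d} (hy₁ : y₁ ∈ Ω ∩ ball z R) (hy₂ : y₂ ∈ Ω ∩ ball z R) {r : ℝ} (hr : 0 < r)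
    (hry : r ≤ dist y₁ y₂) (hrR : r < R) (hA : A ⊆ closure Ω ∩ ball z (R / 2))
    {F : Finset (Euc d)} (hFA : ↑F ⊆ A)
    (hF : (F : Set (Euc d)).Pairwise fun p q ↦ 3 * r ≤ dist p q) :
    F.card * volume (ball (0 : Euc d) (r / (4 * σ))) ≤ volume (innNbhd d Ω A r) := by
  choose! w hw using fun ξ (hξ : ξ ∈ A) ↦
    exists_ball_subset_inter_ball hΩ hσ hU hy₁ hy₂ hr hry hrR (hA hξ)
  have hσ0 : 0 < σ := one_pos.trans_le hσ
  refine card_mul_measure_ball_le volume (hF.pairwiseDisjoint_ball (fun ξ hξ ↦ ?_) ?_)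
    fun ξ hξ ↦ (hw ξ (hFA hξ)).trans (inter_ball_subset_innNbhd (hFA hξ) r)
  · exact mem_ball.1 (hw ξ (hFA hξ) (mem_ball_self (by positivity))).2
  · exact div_le_div_of_nonneg_left hr.le (by norm_num) (by linarith)

lemma ofReal_mul_rpow_sub_le_card_mul_volume_ball {d n : ℕ} {L c a b r s : ℝ} (hc : 0 < c)
    (ha : 0 < a) (hb : 0 < b) (hr : 0 < r) (hL : L ≤ n * (c * (a * r) ^ s)) :
    ENNReal.ofReal (L * volume.real (ball (0 : Euc d) 1) / (c * a ^ s * b ^ d) * r ^ ((d : ℝ) - s))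
      ≤ n * volume (ball (0 : Euc d) (r / b)) := by
  set v := volume.real (ball (0 : Euc d) 1)
  have hcount : L / (c * (a * r) ^ s) ≤ n := by rwa [div_le_iff₀ (by positivity)]
  have hscale : L * v / (c * a ^ s * b ^ d) * r ^ ((d : ℝ) - s) =
      L / (c * (a * r) ^ s) * ((r / b) ^ d * v) := by
    rw [Real.rpow_sub hr, Real.rpow_natCast, Real.mul_rpow ha.le hr.le, div_pow]
    field_simp
  rw [Measure.addHaar_ball_of_pos _ _ (by positivity), finrank_euclideanSpace_fin]
  calc ENNReal.ofReal (L * v / (c * a ^ s * b ^ d) * r ^ ((d : ℝ) - s))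
      ≤ ENNReal.ofReal (n * ((r / b) ^ d * v)) := by
        rw [hscale]
        gcongr
    _ = n * (ENNReal.ofReal ((r / b) ^ d) * volume (ball (0 : Euc d) 1)) := by
        rw [ENNReal.ofReal_mul (by positivity), ENNReal.ofReal_natCast,
          ENNReal.ofReal_mul (by positivity), ofReal_measureReal]

theorem stmt_6_general (d : ℕ) (Ω : Set (Euc d)) (hΩopen : IsOpen Ω)
    (s : ℝ)
    (hreg : AhlforsRegular d (frontier Ω) s)
    (z : Euc d) (hz : z ∈ frontier Ω) (R : ℝ) (hR : 0 < R)
    (hunif : OmegaUniform d Ω z R) :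
    ∃ c' > (0 : ℝ), ∃ R' > (0 : ℝ), ∀ r : ℝ, 0 < r → r < R' →
      ENNReal.ofReal (c' * r ^ ((d : ℝ) - s)) ≤
        volume (innNbhd d Ω (frontier Ω ∩ ball z (R / 2)) r) := by
  obtain ⟨σ, hσ, hU⟩ := hunif
  have hσ0 : 0 < σ := one_pos.trans_le hσ
  have hΩ : Ω ≠ univ := by rintro rfl; simp at hz
  obtain ⟨μ, c, hc, hμA, hμA_fin, hμball⟩ := hreg.exists_measure_bounds hz (half_pos hR)
  obtain ⟨y₁, hy₁, y₂, hy₂, hne⟩ := exists_mem_inter_ball_ne_of_mem_frontier hΩopen hz hR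
  have hv : 0 < volume.real (ball (0 : Euc d) 1) :=
    ENNReal.toReal_pos (measure_ball_pos _ _ one_pos).ne' measure_ball_lt_top.ne
  refine ⟨c⁻¹ * (R / 2) ^ s * volume.real (ball (0 : Euc d) 1) / (c * 3 ^ s * (4 * σ) ^ d),
    by positivity, min (R / 6) (dist y₁ y₂), lt_min (by positivity) (dist_pos.2 hne.symm),
    fun r hr hrR' ↦ ?_⟩
  have hrR := hrR'.trans_le (min_le_left _ _)
  obtain ⟨F, hFA, hFsep, hF⟩ := exists_finset_pairwise_le_dist_le_card_mul
    (by positivity : 0 < 3 * r) hμA hμA_fin (by positivity : 0 < c * (3 * r) ^ s)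
    fun x hx ↦ hμball x hx (3 * r) (by positivity) (by linarith)
  calc _ ≤ F.card * volume (ball (0 : Euc d) (r / (4 * σ))) :=
        ofReal_mul_rpow_sub_le_card_mul_volume_ball hc (by norm_num) (by positivity) hr hF
    _ ≤ _ := card_mul_volume_ball_le_volume_innNbhd hΩ hσ hU hy₁ hy₂ hr
        (hrR'.le.trans (min_le_right _ _)) (by linarith)
        (inter_subset_inter_left _ frontier_subset_closure) hFA hFsep

/-- Proposition 2.4: if `Γ` is Ahlfors `s`-regular with `s ∈ [d-1, d)` and `Ω_{z,R}` is
`Ω`-uniform, then `A = Γ ∩ B(z;R/2)` satisfies `|A_r| ≥ c'·r^(d-s)` for all small `r`. -/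
theorem stmt_6 (d : ℕ) (Ω : Set (Euc d)) (hΩopen : IsOpen Ω) (hΩconn : IsConnected Ω)
    (s : ℝ) (hs1 : (d : ℝ) - 1 ≤ s) (hsd : s < d)
    (hreg : AhlforsRegular d (frontier Ω) s)
    (z : Euc d) (hz : z ∈ frontier Ω) (R : ℝ) (hR : 0 < R)
    (hunif : OmegaUniform d Ω z R) :
    ∃ c' > (0 : ℝ), ∃ R' > (0 : ℝ), ∀ r : ℝ, 0 < r → r < R' →
      ENNReal.ofReal (c' * r ^ ((d : ℝ) - s)) ≤
        volume (innNbhd d Ω (frontier Ω ∩ ball z (R / 2)) r) :=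
  stmt_6_general d Ω hΩopen s hreg z hz R hR hunif
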